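/- The CLEAR-MOT association heuristic can be arbitrarily far from optimal: for every threshold thr > 0 and every m ≥ 2 there exists a constant C > 0 such that for all sufficiently large T there exist hole-free configurations A, B of m trajectories of length T taking values in ℝ² and a sequence Σ ∈ Π^T such that swi(Σ) = 0 and dist(Σ, A, B) ≤ C/T, while every CLEAR-MOT association Σ_MOT for (A, B) with threshold thr satisfies dist(Σ_MOT, A, B) ≥ m·thr − C/T. -/

import Mathlib

/-!
At time `0` both configurations place object `i` at the point `d i` of a line, so CLEAR-MOT must
start with the identity. Afterwards `A` stays put while `B` is `A` shifted
cyclically by one slot: under the identity every object but one is at distance exactly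
`d < thr` from its match, hence anchored, and a permutation fixed off one point is the identity.
So CLEAR-MOT keeps the identity and pays at least `d` per object per frame, whereas the cyclic
shift pays nothing after time `0`. Choosing `d = thr (T - 1) / T` gives the two bounds.
-/

/-- `Σ` is a CLEAR-MOT association for `(A, B)` with threshold `thr`: `σ(1)` is a
minimum-cost matching, and at each later instant the matches within distance `thr` are
anchored while the remaining components are chosen to minimize the cost among all
permutations respecting the anchored matches. -/
def IsClearMot {m T : ℕ} (thr : ℝ)
    (A B : Fin m → Fin T → EuclideanSpace ℝ (Fin 2))
    (S : Fin T → Equiv.Perm (Fin m)) : Prop :=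
  (∀ (h0 : 0 < T) (σ : Equiv.Perm (Fin m)),
    ∑ i, dist (A i ⟨0, h0⟩) (B (S ⟨0, h0⟩ i) ⟨0, h0⟩)
      ≤ ∑ i, dist (A i ⟨0, h0⟩) (B (σ i) ⟨0, h0⟩)) ∧
  ∀ t : Fin (T - 1),
    let prev : Fin T := ⟨t.1, by have := t.2; omega⟩
    let cur : Fin T := ⟨t.1 + 1, by have := t.2; omega⟩
    (∀ i, dist (A i cur) (B (S prev i) cur) < thr → S cur i = S prev i) ∧
    ∀ σ : Equiv.Perm (Fin m),
      (∀ i, dist (A i cur) (B (S prev i) cur) < thr → σ i = S prev i) →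
      ∑ i, dist (A i cur) (B (S cur i) cur) ≤ ∑ i, dist (A i cur) (B (σ i) cur)

/-- The (normalized) switch count
`swi(Σ) = (1/(T−1)) ∑_{t=1}^{T−1} 𝟙{σ(t) ≠ σ(t+1)}`. -/
noncomputable def swi {m T : ℕ} (S : Fin T → Equiv.Perm (Fin m)) : ℝ :=
  (1 / ((T : ℝ) - 1)) * ∑ t : Fin (T - 1),
    (if S ⟨t.1, by have := t.2; omega⟩ ≠ S ⟨t.1 + 1, by have := t.2; omega⟩
     then (1 : ℝ) else 0)

/-- The (normalized) distance term
`dist(Σ, A, B) = (1/T) ∑_{t=1}^{T} ∑_{i=1}^{m} ‖A_i(t) − B_{σ(t)(i)}(t)‖`. -/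
noncomputable def distTerm {m T : ℕ} (S : Fin T → Equiv.Perm (Fin m))
    (A B : Fin m → Fin T → EuclideanSpace ℝ (Fin 2)) : ℝ :=
  (1 / (T : ℝ)) * ∑ t, ∑ i, dist (A i t) (B (S t i) t)

open Finset

lemma Equiv.Perm.eq_one_of_forall_ne_apply_eq {α : Type*} [DecidableEq α] [Fintype α]
    {σ : Equiv.Perm α} (a : α) (h : ∀ x ≠ a, σ x = x) : σ = 1 := by
  refine Equiv.Perm.card_support_le_one.1 <|
    (card_le_card fun x hx => ?_).trans (card_singleton a).le
  exact mem_singleton.2 (by_contra fun hxa => Equiv.Perm.mem_support.1 hx (h x hxa))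

lemma swi_const {m T : ℕ} (σ : Equiv.Perm (Fin m)) : swi (fun _ : Fin T => σ) = 0 := by
  simp [swi]

lemma distTerm_eq_div {m n : ℕ} (S : Fin (n + 1) → Equiv.Perm (Fin m))
    (A B : Fin m → Fin (n + 1) → EuclideanSpace ℝ (Fin 2)) :
    distTerm S A B = (∑ i, dist (A i 0) (B (S 0 i) 0)
      + ∑ t : Fin n, ∑ i, dist (A i t.succ) (B (S t.succ i) t.succ)) / (n + 1) := by
  rw [distTerm, Fin.sum_univ_succ]
  push_cast
  ring

section IsClearMot

variable {m n : ℕ} {thr : ℝ} {A B : Fin m → Fin (n + 1) → EuclideanSpace ℝ (Fin 2)}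
  {S : Fin (n + 1) → Equiv.Perm (Fin m)}

theorem IsClearMot.apply_zero_eq_one (h : IsClearMot thr A B S) (hAB : ∀ i, A i 0 = B i 0)
    (hB : Function.Injective fun j => B j 0) : S 0 = 1 := by
  have hmin := h.1 (Nat.succ_pos n) 1
  have hzero : ∑ i, dist (A i 0) (B (S 0 i) 0) = 0 :=
    le_antisymm (by simpa [hAB] using hmin) (sum_nonneg fun i _ => dist_nonneg)
  ext i
  have hi := (sum_eq_zero_iff_of_nonneg fun i _ => dist_nonneg).1 hzero i (mem_univ i)
  rw [dist_eq_zero, hAB] at hi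
  exact congrArg Fin.val (hB hi).symm

theorem IsClearMot.apply_succ_eq_one (h : IsClearMot thr A B S) {t : Fin n}
    (hprev : S t.castSucc = 1) (i₀ : Fin m)
    (hanch : ∀ i ≠ i₀, dist (A i t.succ) (B i t.succ) < thr) : S t.succ = 1 := by
  have hstep : ∀ i, dist (A i t.succ) (B (S t.castSucc i) t.succ) < thr →
      S t.succ i = S t.castSucc i := (h.2 ⟨t, by omega⟩).1
  refine Equiv.Perm.eq_one_of_forall_ne_apply_eq i₀ fun i hi => ?_
  simpa [hprev] using hstep i (by simpa [hprev] using hanch i hi)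

theorem IsClearMot.eq_one (h : IsClearMot thr A B S) (hAB : ∀ i, A i 0 = B i 0)
    (hB : Function.Injective fun j => B j 0) (i₀ : Fin m)
    (hanch : ∀ t : Fin n, ∀ i ≠ i₀, dist (A i t.succ) (B i t.succ) < thr) : S = 1 :=
  funext <| Fin.induction (h.apply_zero_eq_one hAB hB)
    fun t hprev => h.apply_succ_eq_one hprev i₀ (hanch t)

end IsClearMot

noncomputable def onAxis (x : ℝ) : EuclideanSpace ℝ (Fin 2) := !₂[x, 0]

lemma dist_onAxis (x y : ℝ) : dist (onAxis x) (onAxis y) = dist x y := by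
  simp [onAxis, EuclideanSpace.dist_eq, Fin.sum_univ_two, Real.dist_eq, Real.sqrt_sq_eq_abs]

lemma dist_onAxis_mul_natCast {d : ℝ} (hd : 0 ≤ d) (k l : ℕ) :
    dist (onAxis (d * k)) (onAxis (d * l)) = d * dist k l := by
  rw [dist_onAxis, Real.dist_eq, ← mul_sub, abs_mul, abs_of_nonneg hd, Nat.dist_eq]

lemma onAxis_injective : Function.Injective onAxis := fun x y h => by
  rwa [← dist_eq_zero, dist_onAxis, dist_eq_zero] at h

section Construction

variable {m n : ℕ} [NeZero m]

noncomputable def spacedTracks (d : ℝ) : Fin m → Fin (n + 1) → EuclideanSpace ℝ (Fin 2) :=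
  fun i _ => onAxis (d * i)

noncomputable def shiftedTracks (d : ℝ) : Fin m → Fin (n + 1) → EuclideanSpace ℝ (Fin 2) :=
  fun j => Fin.cons (onAxis (d * j)) fun _ => onAxis (d * (j - 1 : Fin m))

@[simp] lemma shiftedTracks_zero (d : ℝ) (j : Fin m) :
    shiftedTracks (n := n) d j 0 = onAxis (d * j) := rfl

@[simp] lemma shiftedTracks_succ (d : ℝ) (j : Fin m) (t : Fin n) :
    shiftedTracks d j t.succ = onAxis (d * (j - 1 : Fin m)) := rfl

lemma shiftedTracks_add_one_succ (d : ℝ) (i : Fin m) (t : Fin n) :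
    shiftedTracks d (i + 1) t.succ = spacedTracks d i t.succ := by
  simp [spacedTracks]

variable {d : ℝ}

lemma dist_spacedTracks_shiftedTracks_succ (hd : 0 ≤ d) (i : Fin m) (t : Fin n) :
    dist (spacedTracks d i t.succ) (shiftedTracks d i t.succ) =
      d * dist (i : ℕ) (i - 1 : Fin m) :=
  dist_onAxis_mul_natCast hd _ _

lemma distTerm_addRight_one_le (hd : 0 ≤ d) :
    distTerm (fun _ => Equiv.addRight (1 : Fin m)) (spacedTracks (n := n) d) (shiftedTracks d)
      ≤ m * m * d / (n + 1) := by
  rw [distTerm_eq_div]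
  gcongr
  have hlater : ∀ t : Fin n, ∀ i : Fin m,
      dist (spacedTracks d i t.succ) (shiftedTracks d (i + 1) t.succ) = 0 := fun t i => by
    rw [shiftedTracks_add_one_succ, dist_self]
  have hfirst : ∀ i : Fin m,
      dist (spacedTracks (n := n) d i 0) (shiftedTracks (n := n) d (i + 1) 0) ≤ m * d :=
    fun i => by
      rw [spacedTracks, shiftedTracks_zero, dist_onAxis_mul_natCast hd, Nat.dist_eq, mul_comm _ d]
      exact mul_le_mul_of_nonneg_left (abs_sub_le_of_nonneg_of_le (by positivity)
        (mod_cast i.isLt.le) (by positivity) (mod_cast (i + 1).isLt.le)) hd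
  simp only [Equiv.coe_addRight, hlater, sum_const_zero, add_zero]
  calc ∑ i : Fin m, dist (spacedTracks (n := n) d i 0) (shiftedTracks (n := n) d (i + 1) 0)
      ≤ ∑ _i : Fin m, (m : ℝ) * d := sum_le_sum fun i _ => hfirst i
    _ = m * m * d := by simp [mul_assoc]

theorem IsClearMot.eq_one_of_spaced_shifted {thr : ℝ} (hd : 0 < d) (hdthr : d < thr)
    {S : Fin (n + 1) → Equiv.Perm (Fin m)}
    (h : IsClearMot thr (spacedTracks d) (shiftedTracks d) S) : S = 1 := by
  refine h.eq_one (fun i => rfl) ?_ 0 fun t i hi => ?_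
  · exact fun i j hij => Fin.val_injective <| Nat.cast_injective <|
      mul_left_cancel₀ hd.ne' (onAxis_injective hij)
  · rw [dist_spacedTracks_shiftedTracks_succ hd.le, Fin.val_sub_one_of_ne_zero hi, Nat.dist_eq,
      Nat.cast_sub (Nat.one_le_iff_ne_zero.2 (Fin.val_ne_zero_iff.2 hi))]
    simpa using hdthr

lemma le_distTerm_one (hm : 2 ≤ m) (hd : 0 ≤ d) :
    m * d * n / (n + 1) ≤ distTerm 1 (spacedTracks (m := m) (n := n) d) (shiftedTracks d) := by
  rw [distTerm_eq_div]
  gcongr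
  have hone : (1 : Fin m) ≠ 0 := fun h => by have := Fin.one_eq_zero_iff.1 h; omega
  have hlater : ∀ t : Fin n, ∀ i : Fin m,
      d ≤ dist (spacedTracks d i t.succ) (shiftedTracks d i t.succ) := fun t i => by
    rw [dist_spacedTracks_shiftedTracks_succ hd]
    exact le_mul_of_one_le_right hd <| Nat.pairwise_one_le_dist <|
      (Fin.val_injective.ne (sub_eq_self.not.2 hone)).symm
  calc (m : ℝ) * d * n = ∑ _t : Fin n, ∑ _i : Fin m, d := by
        simp only [sum_const, card_univ, Fintype.card_fin, nsmul_eq_mul]; ring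
    _ ≤ ∑ t : Fin n, ∑ i, dist (spacedTracks d i t.succ) (shiftedTracks d i t.succ) :=
      sum_le_sum fun t _ => sum_le_sum fun i _ => hlater t i
    _ ≤ _ := le_add_of_nonneg_left (sum_nonneg fun i _ => dist_nonneg)

end Construction

/-- The CLEAR-MOT association heuristic can be arbitrarily far from optimal: for every
`thr > 0` and `m ≥ 2` there is a constant `C > 0` such that for all sufficiently large
`T` there are hole-free configurations `A, B` in `ℝ²` and an association `Σ` with
`swi(Σ) = 0` and `dist(Σ, A, B) ≤ C/T`, while every CLEAR-MOT association `Σ_MOT`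
satisfies `dist(Σ_MOT, A, B) ≥ m·thr − C/T`. -/
theorem clearMot_association_bad (thr : ℝ) (hthr : 0 < thr) (m : ℕ) (hm : 2 ≤ m) :
    ∃ C : ℝ, 0 < C ∧ ∃ T₀ : ℕ, ∀ T : ℕ, T₀ ≤ T →
      ∃ (A B : Fin m → Fin T → EuclideanSpace ℝ (Fin 2))
        (S : Fin T → Equiv.Perm (Fin m)),
        swi S = 0 ∧ distTerm S A B ≤ C / T ∧
        ∀ SMOT : Fin T → Equiv.Perm (Fin m), IsClearMot thr A B SMOT →
          (m : ℝ) * thr - C / T ≤ distTerm SMOT A B := by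
  have : NeZero m := ⟨by omega⟩
  refine ⟨m * thr * (m + 2), by positivity, 2, fun T hT => ?_⟩
  obtain ⟨n, rfl⟩ : ∃ n, T = n + 1 := ⟨T - 1, by omega⟩
  have hn : (1 : ℝ) ≤ n := mod_cast (by omega : 1 ≤ n)
  set d := thr * n / (n + 1) with hd
  have hd0 : 0 < d := by positivity
  have hdthr : d < thr := by rw [hd, div_lt_iff₀ (by positivity)]; linarith
  refine ⟨spacedTracks d, shiftedTracks d, fun _ => Equiv.addRight 1, swi_const _, ?_,
    fun S hS => ?_⟩
  · refine (distTerm_addRight_one_le hd0.le).trans ?_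
    push_cast
    refine div_le_div_of_nonneg_right ?_ (by positivity)
    nlinarith [mul_le_mul_of_nonneg_left hdthr.le (by positivity : (0 : ℝ) ≤ m * m)]
  · rw [hS.eq_one_of_spaced_shifted hd0 hdthr]
    refine le_trans ?_ (le_distTerm_one hm hd0.le)
    have hsq : ((n : ℝ) + 1) ^ 2 - (m + 2) * (n + 1) ≤ n ^ 2 := by nlinarith
    push_cast
    calc m * thr - m * thr * (m + 2) / (n + 1)
        = m * thr * ((n + 1) ^ 2 - (m + 2) * (n + 1)) / (n + 1) ^ 2 := by field_simp
      _ ≤ m * thr * n ^ 2 / (n + 1) ^ 2 := by gcongr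
      _ = m * d * n / (n + 1) := by rw [hd]; field_simp
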